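/- arXiv:1604.04973 — 5 statements merged into one kernel-verified Lean document; each statement's English description precedes it below -/
import Mathlib

section
/- For a finite group G, the subgroup commutativity degree satisfies sd(G) = (1/|L(G)|^2) · Σ_{H ≤ G} F₂(H), where L(G) is the subgroup lattice of G, F₂(H) is the number of ordered pairs (A,B) of subgroups of H with AB = H, and sd(G) = |{(A,B) : A,B ≤ G, AB = BA}| / |L(G)|². -/
open scoped Classical Pointwise

/-- The factorization number: number of ordered pairs `(A, B)` of subgroups of `G`
with `A * B = G` as a set. -/
noncomputable def F2 (G : Type*) [Group G] : ℕ :=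
  Nat.card {x : Subgroup G × Subgroup G // (x.1 : Set G) * (x.2 : Set G) = Set.univ}

/-- The subgroup commutativity degree of `G`. -/
noncomputable def sd (G : Type*) [Group G] : ℚ :=
  (Nat.card {x : Subgroup G × Subgroup G //
      (x.1 : Set G) * (x.2 : Set G) = (x.2 : Set G) * (x.1 : Set G)} : ℚ) /
    (Nat.card (Subgroup G) : ℚ) ^ 2

/-!
Two subgroups `A, B` permute exactly when the set `AB` is a subgroup `H`, which
is then unique. Sorting the permuting pairs by `H` and viewing `A, B` as subgroups of `H`,
the pairs with product `H` are the factorizations of `H`, so their number is `F₂(H)`.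
-/

namespace Subgroup

variable {G : Type*} [Group G]

theorem coe_mul_coe_inv (A B : Subgroup G) : ((A : Set G) * B)⁻¹ = B * A := by
  rw [mul_inv_rev, inv_coe_set, inv_coe_set]

def ofMulComm (A B : Subgroup G) (h : (A : Set G) * B = B * A) : Subgroup G where
  carrier := A * B
  one_mem' := ⟨1, A.one_mem, 1, B.one_mem, mul_one 1⟩
  mul_mem' {x y} hx hy := by
    have hclosed : (A : Set G) * B * (A * B) = A * B := by
      rw [mul_assoc, ← mul_assoc (B : Set G), ← h, mul_assoc, ← mul_assoc (A : Set G),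
        coe_mul_coe, coe_mul_coe]
    exact hclosed ▸ Set.mul_mem_mul hx hy
  inv_mem' {x} hx := by
    have hinv := Set.inv_mem_inv.2 hx
    rwa [coe_mul_coe_inv, ← h] at hinv

theorem coe_mul_comm_of_coe_mul_eq {A B H : Subgroup G} (h : (A : Set G) * B = H) :
    (A : Set G) * B = B * A := by
  rw [← coe_mul_coe_inv A B, h, inv_coe_set]

theorem left_le_of_coe_mul_eq {A B H : Subgroup G} (h : (A : Set G) * B = H) : A ≤ H := by
  rw [← SetLike.coe_subset_coe, ← h]
  exact Set.subset_mul_left _ B.one_mem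

theorem right_le_of_coe_mul_eq {A B H : Subgroup G} (h : (A : Set G) * B = H) : B ≤ H := by
  rw [← SetLike.coe_subset_coe, ← h]
  exact Set.subset_mul_right _ A.one_mem

theorem coe_map_subtype_mul_eq_iff {H : Subgroup G} {A B : Subgroup H} :
    (A.map H.subtype : Set G) * (B.map H.subtype : Set G) = H ↔
      (A : Set H) * (B : Set H) = Set.univ := by
  have hH : (H : Set G) = H.subtype '' Set.univ := by
    rw [Set.image_univ, coe_subtype, Subtype.range_coe]
  rw [coe_map, coe_map, ← Set.image_mul, hH, (Set.image_injective.2 H.subtype_injective).eq_iff]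

def sigmaCoeMulEqEquiv :
    (Σ H : Subgroup G, {x : Subgroup G × Subgroup G // (x.1 : Set G) * x.2 = H}) ≃
      {x : Subgroup G × Subgroup G // (x.1 : Set G) * x.2 = x.2 * x.1} where
  toFun y := ⟨y.2.1, coe_mul_comm_of_coe_mul_eq y.2.2⟩
  invFun x := ⟨ofMulComm x.1.1 x.1.2 x.2, x.1, rfl⟩
  left_inv y := Sigma.subtype_ext (SetLike.coe_injective y.2.2) rfl
  right_inv _ := rfl

def coeMulEqEquiv (H : Subgroup G) :
    {x : Subgroup H × Subgroup H // (x.1 : Set H) * (x.2 : Set H) = Set.univ} ≃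
      {x : Subgroup G × Subgroup G // (x.1 : Set G) * x.2 = H} where
  toFun y := ⟨(y.1.1.map H.subtype, y.1.2.map H.subtype), coe_map_subtype_mul_eq_iff.2 y.2⟩
  invFun x := ⟨(x.1.1.subgroupOf H, x.1.2.subgroupOf H), by
    rw [← coe_map_subtype_mul_eq_iff, map_subgroupOf_eq_of_le (left_le_of_coe_mul_eq x.2),
      map_subgroupOf_eq_of_le (right_le_of_coe_mul_eq x.2), x.2]⟩
  left_inv y := Subtype.ext <| Prod.ext (comap_map_eq_self_of_injective H.subtype_injective _)
    (comap_map_eq_self_of_injective H.subtype_injective _)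
  right_inv x := Subtype.ext <| Prod.ext (map_subgroupOf_eq_of_le (left_le_of_coe_mul_eq x.2))
    (map_subgroupOf_eq_of_le (right_le_of_coe_mul_eq x.2))

end Subgroup

theorem sd_eq_sum_F2 (G : Type*) [Group G] [Fintype G] :
    sd G = (1 / (Nat.card (Subgroup G) : ℚ) ^ 2) * ∑ H : Subgroup G, (F2 H : ℚ) := by
  have hcount : Nat.card {x : Subgroup G × Subgroup G //
      (x.1 : Set G) * (x.2 : Set G) = (x.2 : Set G) * (x.1 : Set G)} =
      ∑ H : Subgroup G, F2 H := by
    rw [← Nat.card_congr Subgroup.sigmaCoeMulEqEquiv, Nat.card_sigma]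
    exact Finset.sum_congr rfl fun H _ => (Nat.card_congr (Subgroup.coeMulEqEquiv H)).symm
  rw [sd, hcount, Nat.cast_sum, one_div_mul_eq_div]
end

section
/- Let G be a finite p-group of order pⁿ. If μ(1,G) ≠ 0 (Möbius function of the subgroup lattice from the trivial subgroup to G), then G is elementary abelian. -/
/-!
By Hall's argument, `μ(H, G) = 0` whenever `H` does not contain the Frattini subgroup `Φ(G)`, so
`μ(1, G) ≠ 0` forces `Φ(G) = 1`. In a `p`-group every maximal subgroup is normal of index `p`, hence
contains all commutators and all `p`-th powers; these therefore lie in `Φ(G) = 1`.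
-/

open scoped Classical

/-- `μ` is the Möbius function `H ↦ μ(H, G)` of the subgroup lattice of `G`:
it is characterized by `∑_{H ≤ L ≤ G} μ(L, G) = δ_{H,G}`. -/
def IsMobius {G : Type*} [Group G] [Fintype G] (μ : Subgroup G → ℤ) : Prop :=
  ∀ H : Subgroup G,
    ∑ L ∈ Finset.univ.filter (fun L : Subgroup G => H ≤ L), μ L =
      if H = (⊤ : Subgroup G) then 1 else 0

theorem IsMobius.eq_zero_of_not_frattini_le {G : Type*} [Group G] [Fintype G]
    {μ : Subgroup G → ℤ} (hμ : IsMobius μ) {H : Subgroup G} (hH : ¬ frattini G ≤ H) :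
    μ H = 0 := by
  induction H using WellFoundedGT.induction with
  | _ H ih =>
    have hsum_eq_zero {K : Subgroup G} (hK : K ≠ ⊤) :
        ∑ L ∈ Finset.univ.filter (K ≤ ·), μ L = 0 := by
      simpa [hK] using hμ K
    -- Every `L ≥ H` containing `Φ(G)` contains `H ⊔ Φ(G) ≠ ⊤`; every other `L > H` has `μ L = 0`.
    have hsup : H ⊔ frattini G ≠ ⊤ := fun e => hH (frattini_nongenerating e ▸ le_top)
    have hΦ : ∑ L ∈ (Finset.univ.filter (H ≤ ·)).filter (frattini G ≤ ·), μ L = 0 := by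
      rw [Finset.filter_filter]
      simpa only [sup_le_iff] using hsum_eq_zero hsup
    have hnotΦ : ∑ L ∈ (Finset.univ.filter (H ≤ ·)).filter (¬ frattini G ≤ ·), μ L = μ H :=
      Finset.sum_eq_single_of_mem H (by simp [hH]) fun L hL hLH => by
        simp only [Finset.mem_filter, Finset.mem_univ, true_and] at hL
        exact ih L (lt_of_le_of_ne hL.1 (Ne.symm hLH)) hL.2
    have hHtop : H ≠ ⊤ := fun e => hH (e ▸ le_top)
    rw [← hsum_eq_zero hHtop, ← Finset.sum_filter_add_sum_filter_not _ (frattini G ≤ ·), hΦ,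
      hnotΦ, zero_add]

theorem mem_frattini_iff {G : Type*} [Group G] {x : G} :
    x ∈ frattini G ↔ ∀ M : Subgroup G, IsCoatom M → x ∈ M := by
  simp [frattini, Order.radical, Subgroup.mem_iInf]

open scoped commutatorElement

namespace IsPGroup

variable {p : ℕ} [Fact p.Prime] {G : Type*} [Group G] [Finite G]

theorem index_eq_of_isCoatom (hG : IsPGroup p G) {M : Subgroup G} (hM : IsCoatom M) :
    M.index = p := by
  obtain ⟨k, hk⟩ := IsPGroup.iff_card.mp (hG.to_subgroup M)
  obtain ⟨m, hm⟩ := IsPGroup.iff_card.mp hG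
  have hp : p.Prime := Fact.out
  have hp_dvd_index : p ∣ M.index := by
    obtain ⟨j, -, hj⟩ := (Nat.dvd_prime_pow hp).mp (hm ▸ M.index_dvd_card)
    have hj0 : j ≠ 0 := by
      rintro rfl
      exact hM.1 (Subgroup.index_eq_one.mp (by simpa using hj))
    exact hj ▸ dvd_pow_self p hj0
  -- A subgroup of order `p * |M|` above `M` must be `G` by maximality.
  obtain ⟨K, hK, hMK⟩ := Sylow.exists_subgroup_card_pow_succ
    (by rw [← M.card_mul_index, hk, pow_succ]; exact mul_dvd_mul_left _ hp_dvd_index) hk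
  have hKtop : K = ⊤ := hM.2 K <| lt_of_le_of_ne hMK <| by
    rintro rfl
    exact (Nat.pow_lt_pow_right hp.one_lt k.lt_succ_self).ne (hk.symm.trans hK)
  have := M.card_mul_index
  rw [hk, ← Subgroup.card_top (G := G), ← hKtop, hK, pow_succ] at this
  exact Nat.eq_of_mul_eq_mul_left (pow_pos hp.pos k) this

theorem normal_of_isCoatom (hG : IsPGroup p G) {M : Subgroup G} (hM : IsCoatom M) : M.Normal :=
  have := hG.isNilpotent
  Subgroup.NormalizerCondition.normal_of_coatom M Group.normalizerCondition_of_isNilpotent hM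

theorem commutatorElement_mem_of_isCoatom (hG : IsPGroup p G) {M : Subgroup G} (hM : IsCoatom M)
    (a b : G) : ⁅a, b⁆ ∈ M := by
  have := hG.normal_of_isCoatom hM
  have := isCyclic_of_prime_card (p := p) (hG.index_eq_of_isCoatom hM)
  rw [← QuotientGroup.eq_one_iff, ← QuotientGroup.mk'_apply, map_commutatorElement,
    commutatorElement_eq_one_iff_mul_comm]
  exact IsCyclic.commGroup.mul_comm _ _

theorem pow_mem_of_isCoatom (hG : IsPGroup p G) {M : Subgroup G} (hM : IsCoatom M) (g : G) :
    g ^ p ∈ M := by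
  have := hG.normal_of_isCoatom hM
  rw [← QuotientGroup.eq_one_iff, QuotientGroup.mk_pow, ← hG.index_eq_of_isCoatom hM]
  exact pow_card_eq_one'

end IsPGroup

theorem elementaryAbelian_of_mobius_ne_zero (p n : ℕ) (hp : p.Prime)
    (G : Type*) [Group G] [Fintype G] (hG : Nat.card G = p ^ n)
    (μ : Subgroup G → ℤ) (hμ : IsMobius μ) (h : μ ⊥ ≠ 0) :
    (∀ a b : G, a * b = b * a) ∧ ∀ g : G, g ^ p = 1 := by
  have : Fact p.Prime := ⟨hp⟩
  have hpG : IsPGroup p G := IsPGroup.of_card hG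
  have hΦ : frattini G = ⊥ := le_bot_iff.mp (not_not.mp (mt hμ.eq_zero_of_not_frattini_le h))
  have mem_of_forall_isCoatom {x : G} (hx : ∀ M : Subgroup G, IsCoatom M → x ∈ M) : x = 1 := by
    rwa [← Subgroup.mem_bot, ← hΦ, mem_frattini_iff]
  refine ⟨fun a b => ?_, fun g => ?_⟩
  · rw [← commutatorElement_eq_one_iff_mul_comm]
    exact mem_of_forall_isCoatom fun M hM => hpG.commutatorElement_mem_of_isCoatom hM a b
  · exact mem_of_forall_isCoatom fun M hM => hpG.pow_mem_of_isCoatom hM g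
end

section
/- Let p be a prime and G = ℤ/p^{λ₁} × ℤ/p^{λ₂} × ℤ/p^{λ₃} with λ₁ > λ₂ > λ₃ ≥ 1. Among the p² + p + 1 maximal subgroups of G: exactly p² are isomorphic to ℤ/p^{λ₁} × ℤ/p^{λ₂} × ℤ/p^{λ₃−1}, exactly p are isomorphic to ℤ/p^{λ₁} × ℤ/p^{λ₂−1} × ℤ/p^{λ₃}, and exactly 1 is isomorphic to ℤ/p^{λ₁−1} × ℤ/p^{λ₂} × ℤ/p^{λ₃}. -/
/-!
A subgroup of index `p` is the kernel of a nonzero homomorphism to `ZMod p`, and such a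
homomorphism is `(x, y, z) ↦ a x̄ + b ȳ + c z̄`. Scaling `(a, b, c)` so that its last nonzero entry
is `1` gives the `p² + p + 1` normal forms `(a, b, 1)`, `(a, 1, 0)`, `(1, 0, 0)`, and distinct
normal forms have distinct kernels. If the pivot `1` sits in coordinate `i`, a shear of `G`
carries the kernel onto `G` with its `i`-th cyclic factor replaced by the index-`p` subgroup of
that factor, so the kernel has the type in which `λᵢ` drops by one. The three types are told
apart by the number of elements killed by `p ^ λ₃`, respectively `p ^ (λ₁ - 1)`.
-/

open Function

namespace AddMonoidHom

variable {A B C : Type*} [AddCommGroup A] [AddCommGroup B] [AddCommGroup C]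

def kerCoprodCompEquiv (f : A →+ B) (ψ : B →+ C) :
    ((ψ.comp f).coprod ψ).ker ≃+ A × ψ.ker where
  toFun x := (x.1.1, ⟨f x.1.1 + x.1.2, by simpa using mem_ker.mp x.2⟩)
  invFun y := ⟨(y.1, y.2 - f y.1), by simpa using mem_ker.mp y.2.2⟩
  left_inv x := by ext <;> simp
  right_inv y := by ext <;> simp
  map_add' x y := by ext <;> simp; abel

theorem ker_coprod_zero (ψ : A →+ C) : (ψ.coprod (0 : B →+ C)).ker = ψ.ker.prod ⊤ := by
  ext; simp [AddSubgroup.mem_prod]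

theorem ker_smul_of_ne_zero {G K M : Type*} [AddGroup G] [DivisionRing K] [AddCommGroup M]
    [Module K M] (ψ : G →+ M) {c : K} (hc : c ≠ 0) : (c • ψ).ker = ψ.ker := by
  ext; simp [hc]

theorem eq_of_ker_le_of_apply_eq_one {G : Type*} [AddGroup G] {n : ℕ} [NeZero n]
    {ψ₁ ψ₂ : G →+ ZMod n} (h : ψ₁.ker ≤ ψ₂.ker) {g : G} (h₁ : ψ₁ g = 1) (h₂ : ψ₂ g = 1) :
    ψ₁ = ψ₂ := by
  ext x
  have hx : x - (ψ₁ x).val • g ∈ ψ₁.ker := by simp [h₁]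
  have := mem_ker.mp (h hx)
  simp only [map_sub, map_nsmul, h₂, nsmul_eq_mul, mul_one, ZMod.natCast_zmod_val] at this
  exact (sub_eq_zero.mp this).symm

theorem index_ker_of_ne_zero {G : Type*} [AddGroup G] {p : ℕ} [Fact p.Prime]
    {ψ : G →+ ZMod p} (hψ : ψ ≠ 0) : ψ.ker.index = p := by
  have : Fact (Nat.card (ZMod p)).Prime := by rwa [Nat.card_zmod]
  have hrange : ψ.range = ⊤ :=
    ψ.range.eq_bot_or_eq_top_of_prime_card.resolve_left (mt range_eq_bot_iff.mp hψ)
  rw [AddSubgroup.index_ker, hrange, AddSubgroup.card_top, Nat.card_zmod]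

theorem nonempty_ker_addEquiv_zmod {n m : ℕ} [NeZero n] [NeZero m] (f : ZMod n →+ ZMod m)
    (hf : Surjective f) : Nonempty (f.ker ≃+ ZMod (n / m)) := by
  have hcard : Nat.card f.ker = n / m := by
    refine Nat.eq_div_of_mul_eq_left (NeZero.ne m) ?_
    have hindex : f.ker.index = m := by
      rw [AddSubgroup.index_ker, range_eq_top.mpr hf, AddSubgroup.card_top, Nat.card_zmod]
    simpa [hindex] using f.ker.card_mul_index
  exact hcard ▸ ⟨(zmodAddCyclicAddEquiv inferInstance).symm⟩

end AddMonoidHom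

theorem AddSubgroup.exists_ker_eq_of_index_eq_prime {G : Type*} [AddGroup G] {p : ℕ}
    [Fact p.Prime] (H : AddSubgroup G) [H.Normal] (hH : H.index = p) :
    ∃ ψ : G →+ ZMod p, ψ.ker = H := by
  let e : G ⧸ H ≃+ ZMod p := addEquivOfPrimeCardEq (H.index_eq_card ▸ hH) (Nat.card_zmod p)
  refine ⟨e.toAddMonoidHom.comp (QuotientAddGroup.mk' H), ?_⟩
  ext x
  simp

section Torsion

variable {A B : Type*} [AddCommGroup A] [AddCommGroup B]

theorem AddEquiv.card_ker_nsmul_eq (e : A ≃+ B) (d : ℕ) :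
    Nat.card (nsmulAddMonoidHom d : A →+ A).ker = Nat.card (nsmulAddMonoidHom d : B →+ B).ker :=
  Nat.card_congr (e.toEquiv.subtypeEquiv fun x => by simp [← map_nsmul])

theorem card_ker_nsmul_prod (d : ℕ) :
    Nat.card (nsmulAddMonoidHom d : A × B →+ A × B).ker =
      Nat.card (nsmulAddMonoidHom d : A →+ A).ker *
        Nat.card (nsmulAddMonoidHom d : B →+ B).ker := by
  have : (nsmulAddMonoidHom d : A × B →+ A × B) =
      (nsmulAddMonoidHom d).prodMap (nsmulAddMonoidHom d) := by
    ext <;> simp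
  rw [this, AddMonoidHom.ker_prodMap, Nat.card_congr (AddSubgroup.prodEquiv _ _).toEquiv,
    Nat.card_prod]

theorem ZMod.card_ker_nsmul_pow {p : ℕ} (hp : p ≠ 0) (a k : ℕ) :
    Nat.card (nsmulAddMonoidHom (p ^ k) : ZMod (p ^ a) →+ ZMod (p ^ a)).ker = p ^ min a k := by
  have : NeZero (p ^ a) := ⟨pow_ne_zero _ hp⟩
  rw [IsAddCyclic.card_nsmulAddMonoidHom_ker, Nat.card_zmod]
  rcases le_total a k with h | h
  · rw [min_eq_left h, Nat.gcd_eq_left (pow_dvd_pow p h)]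
  · rw [min_eq_right h, Nat.gcd_eq_right (pow_dvd_pow p h)]

end Torsion

theorem ZMod.addMonoidHom_eq_smul_castHom {n m : ℕ} [NeZero n] (h : m ∣ n)
    (ψ : ZMod n →+ ZMod m) : ψ = ψ 1 • (ZMod.castHom h (ZMod m)).toAddMonoidHom := by
  refine AddMonoidHom.ext fun x => ?_
  conv_lhs => rw [← ZMod.natCast_zmod_val x, ← nsmul_one, map_nsmul]
  rw [AddMonoidHom.smul_apply, RingHom.toAddMonoidHom_eq_coe, AddMonoidHom.coe_coe,
    ZMod.castHom_apply, ZMod.cast_eq_val, nsmul_eq_mul, smul_eq_mul, mul_comm]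

theorem ZMod.exists_castHom_comp_eq_smul {m k n : ℕ} [NeZero m] (hm : m ∣ k) (hk : k ∣ n)
    (a : ZMod m) : ∃ f : ZMod n →+ ZMod k,
      (ZMod.castHom hm (ZMod m)).toAddMonoidHom.comp f =
        a • (ZMod.castHom (hm.trans hk) (ZMod m)).toAddMonoidHom := by
  refine ⟨a.val • (ZMod.castHom hk (ZMod k)).toAddMonoidHom, AddMonoidHom.ext fun x => ?_⟩
  rw [AddMonoidHom.comp_apply, AddMonoidHom.smul_apply, AddMonoidHom.smul_apply, map_nsmul,
    smul_eq_mul, nsmul_eq_mul, ZMod.natCast_zmod_val, ← ZMod.castHom_comp hm hk]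
  rfl

namespace ZModPrimePowTriple

def reduce (p l : ℕ) [NeZero l] : ZMod (p ^ l) →+ ZMod p :=
  (ZMod.castHom (dvd_pow_self p (NeZero.ne l)) (ZMod p)).toAddMonoidHom

@[simp]
theorem reduce_one (p l : ℕ) [NeZero l] : reduce p l 1 = 1 :=
  map_one (ZMod.castHom (dvd_pow_self p (NeZero.ne l)) (ZMod p))

theorem nonempty_ker_reduce_addEquiv (p l : ℕ) [NeZero p] [NeZero l] :
    Nonempty ((reduce p l).ker ≃+ ZMod (p ^ (l - 1))) := by
  have := (reduce p l).nonempty_ker_addEquiv_zmod (ZMod.ringHom_surjective _)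
  have hdiv : p ^ l / p = p ^ (l - 1) := by
    rw [← Nat.pow_div (Nat.one_le_iff_ne_zero.mpr (NeZero.ne l)) (Nat.pos_of_neZero p), pow_one]
  exact hdiv ▸ this

theorem exists_reduce_comp_eq_smul {p l l' : ℕ} [NeZero p] [NeZero l] [NeZero l'] (h : l' ≤ l)
    (a : ZMod p) :
    ∃ f : ZMod (p ^ l) →+ ZMod (p ^ l'), (reduce p l').comp f = a • reduce p l :=
  ZMod.exists_castHom_comp_eq_smul (dvd_pow_self p (NeZero.ne l')) (pow_dvd_pow p h) a

/- The suffixes `first`, `second`, `third` name the coordinate whose exponent drops by one in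
an isomorphism type; for `(functional l₁ l₂ l₃ v).ker` it is the position of the pivot of `v`. -/

section NonIsomorphic

variable {p l₁ l₂ l₃ : ℕ}

theorem min_add_min_add_min_eq_of_addEquiv (hp : 2 ≤ p) {a b c a' b' c' : ℕ}
    (e : ZMod (p ^ a) × ZMod (p ^ b) × ZMod (p ^ c) ≃+
      ZMod (p ^ a') × ZMod (p ^ b') × ZMod (p ^ c'))
    (k : ℕ) : min a k + min b k + min c k = min a' k + min b' k + min c' k := by
  have h := e.card_ker_nsmul_eq (p ^ k)
  simp only [card_ker_nsmul_prod, ZMod.card_ker_nsmul_pow (show p ≠ 0 by omega), ← pow_add,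
    ← add_assoc] at h
  exact Nat.pow_right_injective hp h

theorem not_nonempty_addEquiv_third_second (hp : 2 ≤ p) (h₂₃ : l₃ < l₂) (h₃ : l₃ ≠ 0) :
    ¬ Nonempty (ZMod (p ^ l₁) × ZMod (p ^ l₂) × ZMod (p ^ (l₃ - 1)) ≃+
      ZMod (p ^ l₁) × ZMod (p ^ (l₂ - 1)) × ZMod (p ^ l₃)) := fun ⟨e⟩ => by
  have := min_add_min_add_min_eq_of_addEquiv hp e l₃
  omega

theorem not_nonempty_addEquiv_third_first (hp : 2 ≤ p) (h₁₃ : l₃ < l₁) (h₃ : l₃ ≠ 0) :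
    ¬ Nonempty (ZMod (p ^ l₁) × ZMod (p ^ l₂) × ZMod (p ^ (l₃ - 1)) ≃+
      ZMod (p ^ (l₁ - 1)) × ZMod (p ^ l₂) × ZMod (p ^ l₃)) := fun ⟨e⟩ => by
  have := min_add_min_add_min_eq_of_addEquiv hp e l₃
  omega

theorem not_nonempty_addEquiv_second_first (hp : 2 ≤ p) (h₁₂ : l₂ < l₁) (h₂ : l₂ ≠ 0) :
    ¬ Nonempty (ZMod (p ^ l₁) × ZMod (p ^ (l₂ - 1)) × ZMod (p ^ l₃) ≃+
      ZMod (p ^ (l₁ - 1)) × ZMod (p ^ l₂) × ZMod (p ^ l₃)) := fun ⟨e⟩ => by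
  have := min_add_min_add_min_eq_of_addEquiv hp e (l₁ - 1)
  omega

end NonIsomorphic

variable {p : ℕ} (l₁ l₂ l₃ : ℕ) [NeZero l₁] [NeZero l₂] [NeZero l₃]

local notation "G" => ZMod (p ^ l₁) × ZMod (p ^ l₂) × ZMod (p ^ l₃)

def functional (v : ZMod p × ZMod p × ZMod p) : G →+ ZMod p :=
  (v.1 • reduce p l₁).coprod ((v.2.1 • reduce p l₂).coprod (v.2.2 • reduce p l₃))

@[simp]
theorem functional_apply (v : ZMod p × ZMod p × ZMod p) (x : G) :
    functional l₁ l₂ l₃ v x =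
      v.1 * reduce p l₁ x.1 + v.2.1 * reduce p l₂ x.2.1 + v.2.2 * reduce p l₃ x.2.2 := by
  simp only [functional, AddMonoidHom.coprod_apply, AddMonoidHom.smul_apply, smul_eq_mul,
    add_assoc]

theorem functional_ne_zero {v : ZMod p × ZMod p × ZMod p} (hv : v ≠ 0) :
    functional l₁ l₂ l₃ v ≠ 0 := by
  intro h
  refine hv (Prod.ext ?_ (Prod.ext ?_ ?_))
  · simpa using congr($h (1, 0, 0))
  · simpa using congr($h (0, 1, 0))
  · simpa using congr($h (0, 0, 1))

section NeZero

variable [NeZero p]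

variable {l₁ l₂ l₃} in
theorem eq_functional (ψ : G →+ ZMod p) :
    ψ = functional l₁ l₂ l₃ (ψ (1, 0, 0), ψ (0, 1, 0), ψ (0, 0, 1)) := by
  have h₁ := ZMod.addMonoidHom_eq_smul_castHom (dvd_pow_self p (NeZero.ne l₁))
    (ψ.comp (AddMonoidHom.inl _ _))
  have h₂ := ZMod.addMonoidHom_eq_smul_castHom (dvd_pow_self p (NeZero.ne l₂))
    ((ψ.comp (AddMonoidHom.inr _ _)).comp (AddMonoidHom.inl _ _))
  have h₃ := ZMod.addMonoidHom_eq_smul_castHom (dvd_pow_self p (NeZero.ne l₃))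
    ((ψ.comp (AddMonoidHom.inr _ _)).comp (AddMonoidHom.inr _ _))
  conv_lhs => rw [← ψ.coprod_unique, ← (ψ.comp (AddMonoidHom.inr _ _)).coprod_unique, h₁, h₂, h₃]
  rfl

theorem nonempty_ker_functional_addEquiv_third (h₁ : l₃ ≤ l₁) (h₂ : l₃ ≤ l₂) (a b : ZMod p) :
    Nonempty ((functional l₁ l₂ l₃ (a, b, 1)).ker ≃+
      ZMod (p ^ l₁) × ZMod (p ^ l₂) × ZMod (p ^ (l₃ - 1))) := by
  obtain ⟨f₁, hf₁⟩ := exists_reduce_comp_eq_smul h₁ a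
  obtain ⟨f₂, hf₂⟩ := exists_reduce_comp_eq_smul h₂ b
  obtain ⟨e⟩ := nonempty_ker_reduce_addEquiv p l₃
  have hψ : functional l₁ l₂ l₃ (a, b, 1) =
      ((((reduce p l₃).comp f₂).coprod (reduce p l₃)).comp ((AddMonoidHom.inr _ _).comp f₁)).coprod
        (((reduce p l₃).comp f₂).coprod (reduce p l₃)) := by
    rw [← AddMonoidHom.comp_assoc, AddMonoidHom.coprod_comp_inr, hf₁, hf₂, functional, one_smul]
  rw [hψ]
  exact ⟨(AddMonoidHom.kerCoprodCompEquiv _ _).trans <| (AddEquiv.refl _).prodCongr <|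
    (AddMonoidHom.kerCoprodCompEquiv f₂ _).trans <| (AddEquiv.refl _).prodCongr e⟩

theorem nonempty_ker_functional_addEquiv_second (h : l₂ ≤ l₁) (a : ZMod p) :
    Nonempty ((functional l₁ l₂ l₃ (a, 1, 0)).ker ≃+
      ZMod (p ^ l₁) × ZMod (p ^ (l₂ - 1)) × ZMod (p ^ l₃)) := by
  obtain ⟨f, hf⟩ := exists_reduce_comp_eq_smul h a
  obtain ⟨e⟩ := nonempty_ker_reduce_addEquiv p l₂
  have hψ : functional l₁ l₂ l₃ (a, 1, 0) =
      (((reduce p l₂).coprod (0 : ZMod (p ^ l₃) →+ ZMod p)).comp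
        ((AddMonoidHom.inl _ _).comp f)).coprod ((reduce p l₂).coprod 0) := by
    rw [← AddMonoidHom.comp_assoc, AddMonoidHom.coprod_comp_inl, hf, functional, one_smul,
      zero_smul]
  rw [hψ]
  exact ⟨(AddMonoidHom.kerCoprodCompEquiv _ _).trans <| (AddEquiv.refl _).prodCongr <|
    (AddEquiv.addSubgroupCongr (AddMonoidHom.ker_coprod_zero _)).trans <|
      (AddSubgroup.prodEquiv _ _).trans <| e.prodCongr AddSubgroup.topEquiv⟩

theorem nonempty_ker_functional_addEquiv_first :
    Nonempty ((functional l₁ l₂ l₃ ((1, 0, 0) : ZMod p × ZMod p × ZMod p)).ker ≃+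
      ZMod (p ^ (l₁ - 1)) × ZMod (p ^ l₂) × ZMod (p ^ l₃)) := by
  obtain ⟨e⟩ := nonempty_ker_reduce_addEquiv p l₁
  have hψ : functional l₁ l₂ l₃ (1, 0, 0) = (reduce p l₁).coprod 0 := by
    rw [functional, one_smul, zero_smul, zero_smul]
    congr
    ext; simp
  rw [hψ]
  exact ⟨(AddEquiv.addSubgroupCongr (AddMonoidHom.ker_coprod_zero _)).trans <|
      (AddSubgroup.prodEquiv _ _).trans <| e.prodCongr AddSubgroup.topEquiv⟩

variable {l₁ l₂ l₃} in
theorem ker_functional_injective_third :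
    Injective fun ab : ZMod p × ZMod p => (functional l₁ l₂ l₃ (ab.1, ab.2, 1)).ker := by
  rintro ⟨a, b⟩ ⟨a', b'⟩ h
  have := AddMonoidHom.eq_of_ker_le_of_apply_eq_one h.le (g := ((0, 0, 1) : G)) (by simp) (by simp)
  simpa using And.intro congr($this (1, 0, 0)) congr($this (0, 1, 0))

variable {l₁ l₂ l₃} in
theorem ker_functional_injective_second :
    Injective fun a : ZMod p => (functional l₁ l₂ l₃ (a, 1, 0)).ker := by
  intro a a' h
  have := AddMonoidHom.eq_of_ker_le_of_apply_eq_one h.le (g := ((0, 1, 0) : G)) (by simp) (by simp)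
  simpa using congr($this (1, 0, 0))

end NeZero

section Prime

variable [Fact p.Prime]

theorem index_ker_functional {v : ZMod p × ZMod p × ZMod p} (hv : v ≠ 0) :
    (functional l₁ l₂ l₃ v).ker.index = p :=
  AddMonoidHom.index_ker_of_ne_zero (functional_ne_zero l₁ l₂ l₃ hv)

theorem index_eq_iff (H : AddSubgroup G) :
    H.index = p ↔ (∃ a b : ZMod p, (functional l₁ l₂ l₃ (a, b, 1)).ker = H) ∨
      (∃ a : ZMod p, (functional l₁ l₂ l₃ (a, 1, 0)).ker = H) ∨
      (functional l₁ l₂ l₃ (1, 0, 0)).ker = H := by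
  refine ⟨fun hH => ?_, ?_⟩
  · obtain ⟨ψ, rfl⟩ := H.exists_ker_eq_of_index_eq_prime hH
    have normalize : ∀ c : ZMod p, c ≠ 0 → (functional l₁ l₂ l₃
        ((c • ψ) (1, 0, 0), (c • ψ) (0, 1, 0), (c • ψ) (0, 0, 1))).ker = ψ.ker := fun c hc => by
      rw [← eq_functional, AddMonoidHom.ker_smul_of_ne_zero ψ hc]
    by_cases h₃ : ψ (0, 0, 1) = 0
    · by_cases h₂ : ψ (0, 1, 0) = 0
      · have h₁ : ψ (1, 0, 0) ≠ 0 := by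
          intro h₁
          have hψ : ψ = 0 := by
            rw [eq_functional ψ, h₁, h₂, h₃]
            ext
            simp
          rw [hψ, AddMonoidHom.ker_zero, AddSubgroup.index_top] at hH
          exact (Fact.out : p.Prime).one_lt.ne hH
        right; right
        simpa [h₁, h₂, h₃] using normalize _ (inv_ne_zero h₁)
      · right; left
        exact ⟨_, by simpa [h₂, h₃] using normalize _ (inv_ne_zero h₂)⟩
    · left
      exact ⟨_, _, by simpa [h₃] using normalize _ (inv_ne_zero h₃)⟩
  · rintro (⟨a, b, rfl⟩ | ⟨a, rfl⟩ | rfl) <;> exact index_ker_functional _ _ _ (by simp)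

variable {l₁ l₂ l₃}

theorem exists_ker_eq_of_addEquiv_third (h₁₂ : l₂ < l₁) (h₂₃ : l₃ < l₂) {H : AddSubgroup G}
    (hH : H.index = p) (e : H ≃+ ZMod (p ^ l₁) × ZMod (p ^ l₂) × ZMod (p ^ (l₃ - 1))) :
    ∃ a b : ZMod p, (functional l₁ l₂ l₃ (a, b, 1)).ker = H := by
  have hp := (Fact.out : p.Prime).two_le
  rcases (index_eq_iff l₁ l₂ l₃ H).mp hH with h | ⟨a, rfl⟩ | rfl
  · exact h
  · obtain ⟨e'⟩ := nonempty_ker_functional_addEquiv_second l₁ l₂ l₃ h₁₂.le a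
    exact (not_nonempty_addEquiv_third_second hp h₂₃ (NeZero.ne l₃) ⟨e.symm.trans e'⟩).elim
  · obtain ⟨e'⟩ := nonempty_ker_functional_addEquiv_first (p := p) l₁ l₂ l₃
    exact (not_nonempty_addEquiv_third_first hp (h₂₃.trans h₁₂) (NeZero.ne l₃)
      ⟨e.symm.trans e'⟩).elim

theorem exists_ker_eq_of_addEquiv_second (h₁₂ : l₂ < l₁) (h₂₃ : l₃ < l₂) {H : AddSubgroup G}
    (hH : H.index = p) (e : H ≃+ ZMod (p ^ l₁) × ZMod (p ^ (l₂ - 1)) × ZMod (p ^ l₃)) :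
    ∃ a : ZMod p, (functional l₁ l₂ l₃ (a, 1, 0)).ker = H := by
  have hp := (Fact.out : p.Prime).two_le
  rcases (index_eq_iff l₁ l₂ l₃ H).mp hH with ⟨a, b, rfl⟩ | h | rfl
  · obtain ⟨e'⟩ := nonempty_ker_functional_addEquiv_third l₁ l₂ l₃ (h₂₃.trans h₁₂).le h₂₃.le a b
    exact (not_nonempty_addEquiv_third_second hp h₂₃ (NeZero.ne l₃) ⟨e'.symm.trans e⟩).elim
  · exact h
  · obtain ⟨e'⟩ := nonempty_ker_functional_addEquiv_first (p := p) l₁ l₂ l₃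
    exact (not_nonempty_addEquiv_second_first hp h₁₂ (NeZero.ne l₂) ⟨e.symm.trans e'⟩).elim

theorem ker_eq_of_addEquiv_first (h₁₂ : l₂ < l₁) (h₂₃ : l₃ < l₂) {H : AddSubgroup G}
    (hH : H.index = p) (e : H ≃+ ZMod (p ^ (l₁ - 1)) × ZMod (p ^ l₂) × ZMod (p ^ l₃)) :
    (functional l₁ l₂ l₃ (1, 0, 0)).ker = H := by
  have hp := (Fact.out : p.Prime).two_le
  rcases (index_eq_iff l₁ l₂ l₃ H).mp hH with ⟨a, b, rfl⟩ | ⟨a, rfl⟩ | h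
  · obtain ⟨e'⟩ := nonempty_ker_functional_addEquiv_third l₁ l₂ l₃ (h₂₃.trans h₁₂).le h₂₃.le a b
    exact (not_nonempty_addEquiv_third_first hp (h₂₃.trans h₁₂) (NeZero.ne l₃)
      ⟨e'.symm.trans e⟩).elim
  · obtain ⟨e'⟩ := nonempty_ker_functional_addEquiv_second l₁ l₂ l₃ h₁₂.le a
    exact (not_nonempty_addEquiv_second_first hp h₁₂ (NeZero.ne l₂) ⟨e'.symm.trans e⟩).elim
  · exact h

theorem card_index_eq_prime_third (h₁₂ : l₂ < l₁) (h₂₃ : l₃ < l₂) :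
    Nat.card {H : AddSubgroup G // H.index = p ∧
      Nonempty (H ≃+ ZMod (p ^ l₁) × ZMod (p ^ l₂) × ZMod (p ^ (l₃ - 1)))} = p ^ 2 := by
  have key : ∀ H : AddSubgroup G, (H.index = p ∧
      Nonempty (H ≃+ ZMod (p ^ l₁) × ZMod (p ^ l₂) × ZMod (p ^ (l₃ - 1)))) ↔
      H ∈ Set.range fun ab : ZMod p × ZMod p => (functional l₁ l₂ l₃ (ab.1, ab.2, 1)).ker := by
    refine fun H => ⟨fun ⟨hH, ⟨e⟩⟩ => ?_, ?_⟩
    · obtain ⟨a, b, rfl⟩ := exists_ker_eq_of_addEquiv_third h₁₂ h₂₃ hH e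
      exact ⟨(a, b), rfl⟩
    · rintro ⟨⟨a, b⟩, rfl⟩
      exact ⟨index_ker_functional _ _ _ (by simp),
        nonempty_ker_functional_addEquiv_third l₁ l₂ l₃ (h₂₃.trans h₁₂).le h₂₃.le a b⟩
  rw [Nat.card_congr (Equiv.subtypeEquivRight key),
    Nat.card_range_of_injective ker_functional_injective_third, Nat.card_prod, Nat.card_zmod, sq]

theorem card_index_eq_prime_second (h₁₂ : l₂ < l₁) (h₂₃ : l₃ < l₂) :
    Nat.card {H : AddSubgroup G // H.index = p ∧
      Nonempty (H ≃+ ZMod (p ^ l₁) × ZMod (p ^ (l₂ - 1)) × ZMod (p ^ l₃))} = p := by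
  have key : ∀ H : AddSubgroup G, (H.index = p ∧
      Nonempty (H ≃+ ZMod (p ^ l₁) × ZMod (p ^ (l₂ - 1)) × ZMod (p ^ l₃))) ↔
      H ∈ Set.range fun a : ZMod p => (functional l₁ l₂ l₃ (a, 1, 0)).ker := by
    refine fun H => ⟨fun ⟨hH, ⟨e⟩⟩ => exists_ker_eq_of_addEquiv_second h₁₂ h₂₃ hH e, ?_⟩
    rintro ⟨a, rfl⟩
    exact ⟨index_ker_functional _ _ _ (by simp),
      nonempty_ker_functional_addEquiv_second l₁ l₂ l₃ h₁₂.le a⟩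
  rw [Nat.card_congr (Equiv.subtypeEquivRight key),
    Nat.card_range_of_injective ker_functional_injective_second, Nat.card_zmod]

theorem card_index_eq_prime_first (h₁₂ : l₂ < l₁) (h₂₃ : l₃ < l₂) :
    Nat.card {H : AddSubgroup G // H.index = p ∧
      Nonempty (H ≃+ ZMod (p ^ (l₁ - 1)) × ZMod (p ^ l₂) × ZMod (p ^ l₃))} = 1 := by
  have key : ∀ H : AddSubgroup G, (H.index = p ∧
      Nonempty (H ≃+ ZMod (p ^ (l₁ - 1)) × ZMod (p ^ l₂) × ZMod (p ^ l₃))) ↔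
      H = (functional l₁ l₂ l₃ (1, 0, 0)).ker := by
    refine fun H => ⟨fun ⟨hH, ⟨e⟩⟩ => (ker_eq_of_addEquiv_first h₁₂ h₂₃ hH e).symm, ?_⟩
    rintro rfl
    exact ⟨index_ker_functional _ _ _ (by simp), nonempty_ker_functional_addEquiv_first l₁ l₂ l₃⟩
  rw [Nat.card_congr (Equiv.subtypeEquivRight key), Nat.card_unique]

theorem card_index_eq_prime (h₁₂ : l₂ < l₁) (h₂₃ : l₃ < l₂) :
    Nat.card {H : AddSubgroup G // H.index = p} = p ^ 2 + p + 1 := by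
  have hp := (Fact.out : p.Prime).two_le
  let P₃ (H : AddSubgroup G) : Prop :=
    H.index = p ∧ Nonempty (H ≃+ ZMod (p ^ l₁) × ZMod (p ^ l₂) × ZMod (p ^ (l₃ - 1)))
  let P₂ (H : AddSubgroup G) : Prop :=
    H.index = p ∧ Nonempty (H ≃+ ZMod (p ^ l₁) × ZMod (p ^ (l₂ - 1)) × ZMod (p ^ l₃))
  let P₁ (H : AddSubgroup G) : Prop :=
    H.index = p ∧ Nonempty (H ≃+ ZMod (p ^ (l₁ - 1)) × ZMod (p ^ l₂) × ZMod (p ^ l₃))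
  have key : ∀ H, H.index = p ↔ P₃ H ∨ P₂ H ∨ P₁ H := by
    refine fun H => ⟨fun hH => ?_, by rintro (⟨h, -⟩ | ⟨h, -⟩ | ⟨h, -⟩) <;> exact h⟩
    rcases (index_eq_iff l₁ l₂ l₃ H).mp hH with ⟨a, b, rfl⟩ | ⟨a, rfl⟩ | rfl
    · exact .inl ⟨hH,
        nonempty_ker_functional_addEquiv_third l₁ l₂ l₃ (h₂₃.trans h₁₂).le h₂₃.le a b⟩
    · exact .inr (.inl ⟨hH, nonempty_ker_functional_addEquiv_second l₁ l₂ l₃ h₁₂.le a⟩)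
    · exact .inr (.inr ⟨hH, nonempty_ker_functional_addEquiv_first l₁ l₂ l₃⟩)
  have h₃ : Disjoint P₃ fun H => P₂ H ∨ P₁ H := by
    refine Pi.disjoint_iff.mpr fun H => Prop.disjoint_iff.mpr ?_
    rintro ⟨⟨-, ⟨e⟩⟩, ⟨-, ⟨e'⟩⟩ | ⟨-, ⟨e'⟩⟩⟩
    · exact not_nonempty_addEquiv_third_second hp h₂₃ (NeZero.ne l₃) ⟨e.symm.trans e'⟩
    · exact not_nonempty_addEquiv_third_first hp (h₂₃.trans h₁₂) (NeZero.ne l₃)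
        ⟨e.symm.trans e'⟩
  have h₂ : Disjoint P₂ P₁ := by
    refine Pi.disjoint_iff.mpr fun H => Prop.disjoint_iff.mpr ?_
    rintro ⟨⟨-, ⟨e⟩⟩, ⟨-, ⟨e'⟩⟩⟩
    exact not_nonempty_addEquiv_second_first hp h₁₂ (NeZero.ne l₂) ⟨e.symm.trans e'⟩
  classical
  rw [Nat.card_congr ((Equiv.subtypeEquivRight key).trans ((subtypeOrEquiv _ _ h₃).trans
    ((Equiv.refl _).sumCongr (subtypeOrEquiv _ _ h₂)))), Nat.card_sum, Nat.card_sum,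
    card_index_eq_prime_third h₁₂ h₂₃, card_index_eq_prime_second h₁₂ h₂₃,
    card_index_eq_prime_first h₁₂ h₂₃, add_assoc]

end Prime

end ZModPrimePowTriple

theorem count_maximal_subgroups_by_type (p l1 l2 l3 : ℕ) (hp : p.Prime)
    (h12 : l2 < l1) (h23 : l3 < l2) (h3 : 1 ≤ l3) :
    Nat.card {H : AddSubgroup (ZMod (p ^ l1) × ZMod (p ^ l2) × ZMod (p ^ l3)) //
        H.index = p} = p ^ 2 + p + 1 ∧
    Nat.card {H : AddSubgroup (ZMod (p ^ l1) × ZMod (p ^ l2) × ZMod (p ^ l3)) //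
        H.index = p ∧
        Nonempty (H ≃+ (ZMod (p ^ l1) × ZMod (p ^ l2) × ZMod (p ^ (l3 - 1))))} = p ^ 2 ∧
    Nat.card {H : AddSubgroup (ZMod (p ^ l1) × ZMod (p ^ l2) × ZMod (p ^ l3)) //
        H.index = p ∧
        Nonempty (H ≃+ (ZMod (p ^ l1) × ZMod (p ^ (l2 - 1)) × ZMod (p ^ l3)))} = p ∧
    Nat.card {H : AddSubgroup (ZMod (p ^ l1) × ZMod (p ^ l2) × ZMod (p ^ l3)) //
        H.index = p ∧
        Nonempty (H ≃+ (ZMod (p ^ (l1 - 1)) × ZMod (p ^ l2) × ZMod (p ^ l3)))} = 1 := by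
  have : Fact p.Prime := ⟨hp⟩
  have : NeZero l1 := ⟨by omega⟩
  have : NeZero l2 := ⟨by omega⟩
  have : NeZero l3 := ⟨by omega⟩
  open ZModPrimePowTriple in
  exact ⟨card_index_eq_prime h12 h23, card_index_eq_prime_third h12 h23,
    card_index_eq_prime_second h12 h23, card_index_eq_prime_first h12 h23⟩
end

section
/- Let p be a prime and G = ℤ/p^{λ₁} × ℤ/p^{λ₂} × ℤ/p^{λ₃} with λ₁ > λ₂ > λ₃ ≥ 1, M the subgroup of elements of order dividing p, and N ≤ M a subgroup of order p. Then G/N is isomorphic to a maximal subgroup of G; specifically, G/N is isomorphic to one of ℤ/p^{λ₁−1} × ℤ/p^{λ₂} × ℤ/p^{λ₃}, ℤ/p^{λ₁} × ℤ/p^{λ₂−1} × ℤ/p^{λ₃}, or ℤ/p^{λ₁} × ℤ/p^{λ₂} × ℤ/p^{λ₃−1}. -/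
/-!
A subgroup of order `p` is generated by some `n = (a, b, c)` of order `p`. Take the last nonzero
coordinate of `n`; its factor has the smallest exponent, so homomorphisms from it into the earlier
factors reach every `p`-torsion element, and a shear `(x, y) ↦ (x - ψ y, y)` of `G` carries `n` into
that factor alone. Then `G ⧸ N` is `G` with that factor `ℤ/p^l` replaced by its quotient by the
subgroup of order `p`, which is `ℤ/p^(l-1)`. That group embeds in `ℤ/p^l`, so `G ⧸ N` embeds in `G`,
with image of index `|N| = p`.
-/

/-- The subgroup of elements of order dividing `p` in an additive commutative group. -/
def pTorsion (p : ℕ) (G : Type*) [AddCommGroup G] : AddSubgroup G where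
  carrier := {g | p • g = 0}
  zero_mem' := by simp
  add_mem' := by intro a b ha hb; simp only [Set.mem_setOf_eq, smul_add] at *; rw [ha, hb, add_zero]
  neg_mem' := by intro a ha; simp only [Set.mem_setOf_eq, smul_neg] at *; rw [ha, neg_zero]

open AddSubgroup

namespace IsAddCyclic

variable {G : Type*} [AddCommGroup G] [IsAddCyclic G]

theorem nonempty_quotient_addEquiv_zmod_index (H : AddSubgroup G) :
    Nonempty (G ⧸ H ≃+ ZMod H.index) :=
  ⟨(zmodAddCyclicAddEquiv
    (isAddCyclic_of_surjective _ (QuotientAddGroup.mk'_surjective H))).symm⟩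

variable [Finite G]

theorem exists_injective_zmod {d : ℕ} (hd : d ∣ Nat.card G) :
    ∃ f : ZMod d →+ G, Function.Injective f := by
  let H := (nsmulAddMonoidHom (Nat.card G / d) : G →+ G).range
  have hH : Nat.card (ZMod d) = Nat.card H := by
    rw [Nat.card_zmod, card_nsmulAddMonoidHom_range, Nat.gcd_eq_right (Nat.div_dvd_of_dvd hd),
      Nat.div_div_self hd Nat.card_pos.ne']
  let e := addEquivOfAddCyclicCardEq hH
  exact ⟨H.subtype.comp e.toAddMonoidHom, Subtype.val_injective.comp e.injective⟩

theorem mem_zmultiples_of_addOrderOf_nsmul_eq_zero {x y : G} (hy : addOrderOf x • y = 0) :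
    y ∈ zmultiples x := by
  let K := (nsmulAddMonoidHom (addOrderOf x) : G →+ G).ker
  have hle : zmultiples x ≤ K := zmultiples_le.mpr (addOrderOf_nsmul_eq_zero x)
  have hcard : Nat.card K ≤ Nat.card (zmultiples x) := by
    rw [card_nsmulAddMonoidHom_ker, Nat.card_zmultiples]
    exact Nat.gcd_le_right _ (addOrderOf_pos x)
  exact (eq_of_le_of_card_ge hle hcard).symm ▸ hy

end IsAddCyclic

section Shear

variable {A D : Type*} [AddCommGroup A] [AddCommGroup D] {a : A} {d : D}

theorem nonempty_quotient_zmultiples_prod_addEquiv_left (ψ : A →+ D) (hψ : ψ a = d) :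
    Nonempty ((A × D) ⧸ zmultiples (a, d) ≃+ (A ⧸ zmultiples a) × D) := by
  let f : A × D →+ (A ⧸ zmultiples a) × D :=
    ((QuotientAddGroup.mk' _).comp (AddMonoidHom.fst A D)).prod
      (AddMonoidHom.snd A D - ψ.comp (AddMonoidHom.fst A D))
  have hf : Function.Surjective f := by
    rintro ⟨x, y⟩
    obtain ⟨x, rfl⟩ := QuotientAddGroup.mk'_surjective _ x
    exact ⟨(x, y + ψ x), by simp [f]⟩
  have hker : f.ker = zmultiples (a, d) := by
    ext ⟨x, y⟩
    simp only [f, AddMonoidHom.mem_ker, AddMonoidHom.prod_apply, Prod.mk_eq_zero,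
      AddMonoidHom.comp_apply, AddMonoidHom.coe_fst, AddMonoidHom.coe_snd, AddMonoidHom.sub_apply,
      QuotientAddGroup.mk'_apply, QuotientAddGroup.eq_zero_iff, sub_eq_zero, mem_zmultiples_iff,
      Prod.smul_mk, Prod.mk.injEq]
    constructor
    · rintro ⟨⟨k, rfl⟩, rfl⟩
      exact ⟨k, rfl, by rw [map_zsmul, hψ]⟩
    · rintro ⟨k, rfl, rfl⟩
      exact ⟨⟨k, rfl⟩, by rw [map_zsmul, hψ]⟩
  exact ⟨(QuotientAddGroup.quotientAddEquivOfEq hker.symm).trans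
    (QuotientAddGroup.quotientKerEquivOfSurjective f hf)⟩

theorem nonempty_quotient_zmultiples_prod_addEquiv_right (ψ : D →+ A) (hψ : ψ d = a) :
    Nonempty ((A × D) ⧸ zmultiples (a, d) ≃+ A × (D ⧸ zmultiples d)) := by
  let f : A × D →+ A × (D ⧸ zmultiples d) :=
    (AddMonoidHom.fst A D - ψ.comp (AddMonoidHom.snd A D)).prod
      ((QuotientAddGroup.mk' _).comp (AddMonoidHom.snd A D))
  have hf : Function.Surjective f := by
    rintro ⟨x, y⟩
    obtain ⟨y, rfl⟩ := QuotientAddGroup.mk'_surjective _ y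
    exact ⟨(x + ψ y, y), by simp [f]⟩
  have hker : f.ker = zmultiples (a, d) := by
    ext ⟨x, y⟩
    simp only [f, AddMonoidHom.mem_ker, AddMonoidHom.prod_apply, Prod.mk_eq_zero,
      AddMonoidHom.comp_apply, AddMonoidHom.coe_fst, AddMonoidHom.coe_snd, AddMonoidHom.sub_apply,
      QuotientAddGroup.mk'_apply, QuotientAddGroup.eq_zero_iff, sub_eq_zero, mem_zmultiples_iff,
      Prod.smul_mk, Prod.mk.injEq]
    constructor
    · rintro ⟨rfl, k, rfl⟩
      exact ⟨k, by rw [map_zsmul, hψ], rfl⟩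
    · rintro ⟨k, rfl, rfl⟩
      exact ⟨by rw [map_zsmul, hψ], k, rfl⟩
  exact ⟨(QuotientAddGroup.quotientAddEquivOfEq hker.symm).trans
    (QuotientAddGroup.quotientKerEquivOfSurjective f hf)⟩

end Shear

theorem exists_index_eq_card_and_addEquiv_of_injective {G K : Type*} [AddCommGroup G]
    [AddCommGroup K] [Finite G] {N : AddSubgroup G} (e : G ⧸ N ≃+ K) {f : K →+ G}
    (hf : Function.Injective f) :
    ∃ H : AddSubgroup G, H.index = Nat.card N ∧ Nonempty (G ⧸ N ≃+ H) := by
  let e' := e.trans (AddMonoidHom.ofInjective hf)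
  refine ⟨f.range, ?_, ⟨e'⟩⟩
  have h := index_mul_card f.range
  rw [← Nat.card_congr e'.toEquiv, ← index_eq_card, ← card_mul_index N] at h
  exact Nat.eq_of_mul_eq_mul_right (Nat.pos_of_ne_zero index_ne_zero_of_finite) h

namespace ZMod

section NeZero

variable {p : ℕ} [NeZero p]

theorem exists_injective_addMonoidHom_pow_pred (l : ℕ) :
    ∃ f : ZMod (p ^ (l - 1)) →+ ZMod (p ^ l), Function.Injective f :=
  IsAddCyclic.exists_injective_zmod (by rw [Nat.card_zmod]; exact pow_dvd_pow p (l.sub_le 1))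

theorem exists_index_eq_card_and_addEquiv {l₁ l₂ l₃ : ℕ}
    {N : AddSubgroup (ZMod (p ^ l₁) × ZMod (p ^ l₂) × ZMod (p ^ l₃))}
    (h : Nonempty ((ZMod (p ^ l₁) × ZMod (p ^ l₂) × ZMod (p ^ l₃)) ⧸ N ≃+
        (ZMod (p ^ (l₁ - 1)) × ZMod (p ^ l₂) × ZMod (p ^ l₃))) ∨
      Nonempty ((ZMod (p ^ l₁) × ZMod (p ^ l₂) × ZMod (p ^ l₃)) ⧸ N ≃+
        (ZMod (p ^ l₁) × ZMod (p ^ (l₂ - 1)) × ZMod (p ^ l₃))) ∨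
      Nonempty ((ZMod (p ^ l₁) × ZMod (p ^ l₂) × ZMod (p ^ l₃)) ⧸ N ≃+
        (ZMod (p ^ l₁) × ZMod (p ^ l₂) × ZMod (p ^ (l₃ - 1))))) :
    ∃ H : AddSubgroup (ZMod (p ^ l₁) × ZMod (p ^ l₂) × ZMod (p ^ l₃)),
      H.index = Nat.card N ∧
        Nonempty ((ZMod (p ^ l₁) × ZMod (p ^ l₂) × ZMod (p ^ l₃)) ⧸ N ≃+ H) := by
  obtain ⟨f₁, hf₁⟩ := exists_injective_addMonoidHom_pow_pred (p := p) l₁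
  obtain ⟨f₂, hf₂⟩ := exists_injective_addMonoidHom_pow_pred (p := p) l₂
  obtain ⟨f₃, hf₃⟩ := exists_injective_addMonoidHom_pow_pred (p := p) l₃
  rcases h with h | h | h <;> obtain ⟨e⟩ := h
  · exact exists_index_eq_card_and_addEquiv_of_injective e
      (f := f₁.prodMap (AddMonoidHom.id _)) (hf₁.prodMap Function.injective_id)
  · exact exists_index_eq_card_and_addEquiv_of_injective e
      (f := (AddMonoidHom.id _).prodMap (f₂.prodMap (AddMonoidHom.id _)))
      (Function.injective_id.prodMap (hf₂.prodMap Function.injective_id))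
  · exact exists_index_eq_card_and_addEquiv_of_injective e
      (f := (AddMonoidHom.id _).prodMap ((AddMonoidHom.id _).prodMap f₃))
      (Function.injective_id.prodMap (Function.injective_id.prodMap hf₃))

end NeZero

variable {p : ℕ} [Fact p.Prime]

theorem exists_addMonoidHom_apply_eq {s t : ℕ} (hst : s ≤ t) {u : ZMod (p ^ s)}
    (hu : addOrderOf u = p) {a : ZMod (p ^ t)} (ha : p • a = 0) :
    ∃ ψ : ZMod (p ^ s) →+ ZMod (p ^ t), ψ u = a := by
  obtain ⟨φ, hφ⟩ := IsAddCyclic.exists_injective_zmod (G := ZMod (p ^ t)) (d := p ^ s)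
    (by rw [Nat.card_zmod]; exact pow_dvd_pow p hst)
  have hφu : addOrderOf (φ u) = p := by rw [addOrderOf_injective φ hφ, hu]
  obtain ⟨k, hk⟩ := mem_zmultiples_iff.mp
    (IsAddCyclic.mem_zmultiples_of_addOrderOf_nsmul_eq_zero (by rwa [hφu]))
  exact ⟨k • φ, hk⟩

theorem nonempty_quotient_zmultiples_addEquiv {l : ℕ} {u : ZMod (p ^ l)}
    (hu : addOrderOf u = p) : Nonempty (ZMod (p ^ l) ⧸ zmultiples u ≃+ ZMod (p ^ (l - 1))) := by
  have h := index_mul_card (zmultiples u)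
  rw [Nat.card_zmultiples, hu, Nat.card_zmod] at h
  have hl : l ≠ 0 := by
    rintro rfl
    exact (Fact.out : p.Prime).ne_one (Nat.eq_one_of_mul_eq_one_left h)
  have hindex : (zmultiples u).index = p ^ (l - 1) :=
    Nat.eq_of_mul_eq_mul_right (Fact.out : p.Prime).pos (h.trans (pow_sub_one_mul hl p).symm)
  exact hindex ▸ IsAddCyclic.nonempty_quotient_addEquiv_zmod_index _

variable {l₁ l₂ l₃ : ℕ}

theorem nonempty_quotient_zmultiples_prod_prod_addEquiv (h₁₂ : l₂ ≤ l₁) (h₂₃ : l₃ ≤ l₂)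
    {n : ZMod (p ^ l₁) × ZMod (p ^ l₂) × ZMod (p ^ l₃)} (hn : addOrderOf n = p) :
    Nonempty ((ZMod (p ^ l₁) × ZMod (p ^ l₂) × ZMod (p ^ l₃)) ⧸ zmultiples n ≃+
        (ZMod (p ^ (l₁ - 1)) × ZMod (p ^ l₂) × ZMod (p ^ l₃))) ∨
      Nonempty ((ZMod (p ^ l₁) × ZMod (p ^ l₂) × ZMod (p ^ l₃)) ⧸ zmultiples n ≃+
        (ZMod (p ^ l₁) × ZMod (p ^ (l₂ - 1)) × ZMod (p ^ l₃))) ∨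
      Nonempty ((ZMod (p ^ l₁) × ZMod (p ^ l₂) × ZMod (p ^ l₃)) ⧸ zmultiples n ≃+
        (ZMod (p ^ l₁) × ZMod (p ^ l₂) × ZMod (p ^ (l₃ - 1)))) := by
  obtain ⟨a, b, c⟩ := n
  obtain ⟨hpa, hpb, hpc⟩ : p • a = 0 ∧ p • b = 0 ∧ p • c = 0 := by
    simpa only [Prod.smul_mk, Prod.mk_eq_zero, hn] using addOrderOf_nsmul_eq_zero (a, b, c)
  by_cases hc : c = 0
  · subst hc
    by_cases hb : b = 0
    · subst hb
      have ha : addOrderOf a = p := by simpa [Prod.addOrderOf_mk] using hn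
      obtain ⟨e₁⟩ := nonempty_quotient_zmultiples_prod_addEquiv_left
        (0 : ZMod (p ^ l₁) →+ ZMod (p ^ l₂) × ZMod (p ^ l₃)) (a := a) rfl
      obtain ⟨e₂⟩ := nonempty_quotient_zmultiples_addEquiv ha
      exact Or.inl ⟨e₁.trans (e₂.prodCongr (AddEquiv.refl _))⟩
    · have hbp : addOrderOf b = p := addOrderOf_eq_prime hpb hb
      obtain ⟨ψ, hψ⟩ := exists_addMonoidHom_apply_eq h₁₂ hbp hpa
      obtain ⟨e₁⟩ := nonempty_quotient_zmultiples_prod_addEquiv_right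
        (ψ.comp (AddMonoidHom.fst _ (ZMod (p ^ l₃)))) (d := (b, 0)) hψ
      obtain ⟨e₂⟩ := nonempty_quotient_zmultiples_prod_addEquiv_left
        (0 : ZMod (p ^ l₂) →+ ZMod (p ^ l₃)) (a := b) rfl
      obtain ⟨e₃⟩ := nonempty_quotient_zmultiples_addEquiv hbp
      exact Or.inr (Or.inl ⟨e₁.trans ((AddEquiv.refl _).prodCongr
        (e₂.trans (e₃.prodCongr (AddEquiv.refl _))))⟩)
  · have hcp : addOrderOf c = p := addOrderOf_eq_prime hpc hc
    obtain ⟨ψ₁, hψ₁⟩ := exists_addMonoidHom_apply_eq (h₂₃.trans h₁₂) hcp hpa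
    obtain ⟨ψ₂, hψ₂⟩ := exists_addMonoidHom_apply_eq h₂₃ hcp hpb
    obtain ⟨e₁⟩ := nonempty_quotient_zmultiples_prod_addEquiv_right
      (ψ₁.comp (AddMonoidHom.snd (ZMod (p ^ l₂)) _)) (d := (b, c)) hψ₁
    obtain ⟨e₂⟩ := nonempty_quotient_zmultiples_prod_addEquiv_right ψ₂ hψ₂
    obtain ⟨e₃⟩ := nonempty_quotient_zmultiples_addEquiv hcp
    exact Or.inr (Or.inr ⟨e₁.trans ((AddEquiv.refl _).prodCongr
      (e₂.trans ((AddEquiv.refl _).prodCongr e₃)))⟩)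

end ZMod

theorem quotient_by_order_p_subgroup_general (p l1 l2 l3 : ℕ) (hp : p.Prime)
    (h12 : l2 < l1) (h23 : l3 < l2)
    (N : AddSubgroup (ZMod (p ^ l1) × ZMod (p ^ l2) × ZMod (p ^ l3)))
    (hN : Nat.card N = p) :
    (∃ H : AddSubgroup (ZMod (p ^ l1) × ZMod (p ^ l2) × ZMod (p ^ l3)),
        H.index = p ∧
        Nonempty (((ZMod (p ^ l1) × ZMod (p ^ l2) × ZMod (p ^ l3)) ⧸ N) ≃+ H)) ∧
    (Nonempty (((ZMod (p ^ l1) × ZMod (p ^ l2) × ZMod (p ^ l3)) ⧸ N) ≃+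
        (ZMod (p ^ (l1 - 1)) × ZMod (p ^ l2) × ZMod (p ^ l3))) ∨
     Nonempty (((ZMod (p ^ l1) × ZMod (p ^ l2) × ZMod (p ^ l3)) ⧸ N) ≃+
        (ZMod (p ^ l1) × ZMod (p ^ (l2 - 1)) × ZMod (p ^ l3))) ∨
     Nonempty (((ZMod (p ^ l1) × ZMod (p ^ l2) × ZMod (p ^ l3)) ⧸ N) ≃+
        (ZMod (p ^ l1) × ZMod (p ^ l2) × ZMod (p ^ (l3 - 1))))) := by
  have := Fact.mk hp
  obtain ⟨n, rfl⟩ :=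
    (AddSubgroup.isAddCyclic_iff_exists_zmultiples_eq_top N).mp (isAddCyclic_of_prime_card hN)
  have hn : addOrderOf n = p := Nat.card_zmultiples n ▸ hN
  have hquot := ZMod.nonempty_quotient_zmultiples_prod_prod_addEquiv h12.le h23.le hn
  obtain ⟨H, hH, eH⟩ := ZMod.exists_index_eq_card_and_addEquiv hquot
  exact ⟨⟨H, hH.trans hN, eH⟩, hquot⟩

theorem quotient_by_order_p_subgroup (p l1 l2 l3 : ℕ) (hp : p.Prime)
    (h12 : l2 < l1) (h23 : l3 < l2) (h3 : 1 ≤ l3)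
    (N : AddSubgroup (ZMod (p ^ l1) × ZMod (p ^ l2) × ZMod (p ^ l3)))
    (hNM : N ≤ pTorsion p (ZMod (p ^ l1) × ZMod (p ^ l2) × ZMod (p ^ l3)))
    (hN : Nat.card N = p) :
    (∃ H : AddSubgroup (ZMod (p ^ l1) × ZMod (p ^ l2) × ZMod (p ^ l3)),
        H.index = p ∧
        Nonempty (((ZMod (p ^ l1) × ZMod (p ^ l2) × ZMod (p ^ l3)) ⧸ N) ≃+ H)) ∧
    (Nonempty (((ZMod (p ^ l1) × ZMod (p ^ l2) × ZMod (p ^ l3)) ⧸ N) ≃+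
        (ZMod (p ^ (l1 - 1)) × ZMod (p ^ l2) × ZMod (p ^ l3))) ∨
     Nonempty (((ZMod (p ^ l1) × ZMod (p ^ l2) × ZMod (p ^ l3)) ⧸ N) ≃+
        (ZMod (p ^ l1) × ZMod (p ^ (l2 - 1)) × ZMod (p ^ l3))) ∨
     Nonempty (((ZMod (p ^ l1) × ZMod (p ^ l2) × ZMod (p ^ l3)) ⧸ N) ≃+
        (ZMod (p ^ l1) × ZMod (p ^ l2) × ZMod (p ^ (l3 - 1))))) :=
  quotient_by_order_p_subgroup_general p l1 l2 l3 hp h12 h23 N hN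
end

section
/- Let G be a finite abelian p-group and H a subgroup of G with μ(H,G) ≠ 0 (Möbius function of the subgroup lattice of G). Then the quotient G/H is elementary abelian; equivalently, H contains the Frattini subgroup pG. -/
/-!
For `H ≠ G` split the recursion `∑_{L ≥ H} μ L = 0` according to whether `L` contains `pG`.
By downward induction `μ L = 0` whenever `pG ≰ L`, so among those terms only `μ H` survives,
and the others add up to `∑_{L ≥ H + pG} μ L`, which is `0` as soon as `H + pG ≠ G`.
That is automatic since `pG` is superfluous: `H + pG = G` gives `H + p^k G = G` for all `k`,
and `p^n G = 0`.
-/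

open scoped Classical

/-- `μ` is the Möbius function `H ↦ μ(H, G)` of the subgroup lattice of an additive
group `G`: it is characterized by `∑_{H ≤ L ≤ G} μ(L, G) = δ_{H,G}`. -/
def IsAddMobius {G : Type*} [AddGroup G] [Fintype G] (μ : AddSubgroup G → ℤ) : Prop :=
  ∀ H : AddSubgroup G,
    ∑ L ∈ Finset.univ.filter (fun L : AddSubgroup G => H ≤ L), μ L =
      if H = (⊤ : AddSubgroup G) then 1 else 0

open Finset

section Lattice

variable {α : Type*} [SemilatticeSup α] [OrderTop α] [Fintype α]

theorem mobius_eq_zero_of_not_le (μ : α → ℤ)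
    (hμ : ∀ a, ∑ b ∈ univ.filter (a ≤ ·), μ b = if a = ⊤ then 1 else 0)
    {k : α} (hk : ∀ a, a ⊔ k = ⊤ → a = ⊤) {a : α} (ha : ¬k ≤ a) : μ a = 0 := by
  induction a using WellFoundedGT.induction with
  | _ a ih =>
    have ha_ne_top : a ≠ ⊤ := fun h => ha (h ▸ le_top)
    have hsup_ne_top : a ⊔ k ≠ ⊤ := fun h => ha_ne_top (hk a h)
    have hsplit := sum_filter_add_sum_filter_not (univ.filter (a ≤ ·)) (k ≤ ·) μ
    have habove : (univ.filter (a ≤ ·)).filter (k ≤ ·) = univ.filter (a ⊔ k ≤ ·) := by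
      ext b
      simp only [mem_filter, mem_univ, true_and, sup_le_iff]
    have hrest : ∑ b ∈ (univ.filter (a ≤ ·)).filter (¬k ≤ ·), μ b = μ a := by
      refine sum_eq_single_of_mem a (by simpa using ha) fun b hb hba => ?_
      simp only [mem_filter, mem_univ, true_and] at hb
      exact ih b (lt_of_le_of_ne hb.1 (Ne.symm hba)) hb.2
    rw [habove, hrest, hμ, hμ, if_neg ha_ne_top, if_neg hsup_ne_top] at hsplit
    omega

end Lattice

section FiniteAbelian

variable {G : Type*} [AddCommGroup G]

theorem sup_range_nsmul_pow_eq_top {H : AddSubgroup G} {m : ℕ}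
    (hH : H ⊔ (nsmulAddMonoidHom m : G →+ G).range = ⊤) (k : ℕ) :
    H ⊔ (nsmulAddMonoidHom (m ^ k) : G →+ G).range = ⊤ := by
  induction k with
  | zero => exact top_le_iff.mp fun g _ => AddSubgroup.mem_sup_right ⟨g, one_smul ℕ g⟩
  | succ k ih =>
    rw [AddSubgroup.eq_top_iff'] at ih hH ⊢
    intro g
    obtain ⟨h₁, hh₁, _, ⟨g₁, rfl⟩, rfl⟩ := AddSubgroup.mem_sup.mp (ih g)
    obtain ⟨h₂, hh₂, _, ⟨g₂, rfl⟩, rfl⟩ := AddSubgroup.mem_sup.mp (hH g₁)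
    refine AddSubgroup.mem_sup.mpr ⟨h₁ + m ^ k • h₂, add_mem hh₁ (AddSubgroup.nsmul_mem H hh₂ _),
      (m ^ (k + 1)) • g₂, ⟨g₂, rfl⟩, ?_⟩
    simp only [nsmulAddMonoidHom_apply, smul_add, pow_succ, mul_smul, add_assoc]

theorem eq_top_of_sup_range_nsmul_eq_top [Fintype G] {p n : ℕ} (hcard : Nat.card G = p ^ n)
    {H : AddSubgroup G} (hH : H ⊔ (nsmulAddMonoidHom p : G →+ G).range = ⊤) : H = ⊤ := by
  have hkill : (nsmulAddMonoidHom (p ^ n) : G →+ G).range = ⊥ := by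
    rw [eq_bot_iff]
    rintro _ ⟨g, rfl⟩
    simp [← hcard]
  simpa [hkill] using sup_range_nsmul_pow_eq_top hH n

end FiniteAbelian

theorem quotient_elementaryAbelian_of_mobius_ne_zero_general (p : ℕ)
    (G : Type*) [AddCommGroup G] [Fintype G] (hpG : ∃ n : ℕ, Nat.card G = p ^ n)
    (H : AddSubgroup G) (μ : AddSubgroup G → ℤ) (hμ : IsAddMobius μ) (h : μ H ≠ 0) :
    (∀ g : G ⧸ H, p • g = 0) ∧ (∀ g : G, p • g ∈ H) := by
  obtain ⟨n, hcard⟩ := hpG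
  have hle : (nsmulAddMonoidHom p : G →+ G).range ≤ H := by
    by_contra hnle
    exact h (mobius_eq_zero_of_not_le μ hμ
      (fun _ => eq_top_of_sup_range_nsmul_eq_top hcard) hnle)
  have hmem : ∀ g : G, p • g ∈ H := fun g => hle ⟨g, rfl⟩
  refine ⟨fun g => ?_, hmem⟩
  induction g using QuotientAddGroup.induction_on with
  | H g => exact (QuotientAddGroup.eq_zero_iff _).2 (hmem g)

theorem quotient_elementaryAbelian_of_mobius_ne_zero (p : ℕ) (hp : p.Prime)
    (G : Type*) [AddCommGroup G] [Fintype G] (hpG : ∃ n : ℕ, Nat.card G = p ^ n)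
    (H : AddSubgroup G) (μ : AddSubgroup G → ℤ) (hμ : IsAddMobius μ) (h : μ H ≠ 0) :
    (∀ g : G ⧸ H, p • g = 0) ∧ (∀ g : G, p • g ∈ H) :=
  quotient_elementaryAbelian_of_mobius_ne_zero_general p G hpG H μ hμ h
end
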